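/- Let X ⊂ ℝ^d be compact and P a distribution on X × Y with envelope of order γ > 0 (i.e., |2η(x)−1| ≤ c_γ τ_x^γ for P_X-a.e. x) and Tsybakov noise exponent 0 ≤ q < 1. Then for all t, τ ≥ 0: ∫_X |2η(x)−1| e^{−τ_x²/t} dP_X(x) ≤ C τ^{q+1} + exp(−(τ/c_γ)^{2/γ}/t), where C is the Tsybakov constant. -/

import Mathlib

/-!
Split `X` along `A = {|2η - 1| ≤ τ}`. On `A` the integrand is at most `τ`, and Tsybakov's
condition bounds `P_X(A)` by `C τ^q`. Off `A` the margin is at most `1`, and the envelope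
condition forces `τ < c_γ τ_x^γ`, i.e. `τ_x² ≥ (τ / c_γ)^{2/γ}`, so the Gaussian weight is at most
`exp(-(τ / c_γ)^{2/γ} / t)`.
-/

open MeasureTheory Metric

/-- The distance `τ_x` of a point to the union of the set `{η = 1/2}` and the opposite class:
`τ_x = d(x, X₀ ∪ X₁)` if `η x < 1/2`, `τ_x = d(x, X₀ ∪ X₋₁)` if `η x > 1/2`, `0` otherwise. -/
noncomputable def tauDist {d : ℕ} (X : Set (EuclideanSpace ℝ (Fin d)))
    (η : EuclideanSpace ℝ (Fin d) → ℝ) (x : EuclideanSpace ℝ (Fin d)) : ℝ :=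
  if η x < 1 / 2 then
    infDist x ({z ∈ X | η z = 1 / 2} ∪ {z ∈ X | 1 / 2 < η z})
  else if 1 / 2 < η x then
    infDist x ({z ∈ X | η z = 1 / 2} ∪ {z ∈ X | η z < 1 / 2})
  else 0

section tauDist

variable {d : ℕ} (X : Set (EuclideanSpace ℝ (Fin d))) (η : EuclideanSpace ℝ (Fin d) → ℝ)

lemma tauDist_nonneg (x : EuclideanSpace ℝ (Fin d)) : 0 ≤ tauDist X η x := by
  unfold tauDist
  split_ifs <;> first | exact infDist_nonneg | exact le_rfl

lemma measurable_tauDist (hη : Measurable η) : Measurable (tauDist X η) :=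
  (continuous_infDist_pt _).measurable.ite (hη measurableSet_Iio)
    ((continuous_infDist_pt _).measurable.ite (hη measurableSet_Ioi) measurable_const)

end tauDist

lemma Real.rpow_two_div_le_sq_of_le_rpow {a r γ : ℝ} (ha : 0 ≤ a) (hr : 0 ≤ r) (hγ : 0 < γ)
    (h : a ≤ r ^ γ) : a ^ (2 / γ) ≤ r ^ 2 := by
  have hroot : a ^ γ⁻¹ ≤ r := (Real.rpow_inv_le_iff_of_pos ha hr hγ).2 h
  calc a ^ (2 / γ) = (a ^ γ⁻¹) ^ 2 := by
        rw [← Real.rpow_mul_natCast ha, div_eq_inv_mul, Nat.cast_ofNat]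
    _ ≤ r ^ 2 := pow_le_pow_left₀ (by positivity) hroot 2

lemma Real.exp_neg_div_le_exp_neg_div {a b t : ℝ} (hab : a ≤ b) (ht : 0 ≤ t) :
    Real.exp (-b / t) ≤ Real.exp (-a / t) :=
  Real.exp_le_exp.2 (div_le_div_of_nonneg_right (neg_le_neg hab) ht)

lemma Real.exp_neg_sq_div_le_of_le_mul_rpow {τ c r γ t : ℝ} (hτ : 0 ≤ τ) (hc : 0 < c)
    (hr : 0 ≤ r) (hγ : 0 < γ) (ht : 0 ≤ t) (h : τ ≤ c * r ^ γ) :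
    Real.exp (-r ^ 2 / t) ≤ Real.exp (-(τ / c) ^ (2 / γ) / t) := by
  have hτc : τ / c ≤ r ^ γ := (div_le_iff₀' hc).2 h
  exact Real.exp_neg_div_le_exp_neg_div
    (Real.rpow_two_div_le_sq_of_le_rpow (div_nonneg hτ hc.le) hr hγ hτc) ht

lemma mul_le_mul_rpow_add_one {m C τ q : ℝ} (hC : 0 ≤ C) (hτ : 0 ≤ τ)
    (hm : 0 < τ → m ≤ C * τ ^ q) : m * τ ≤ C * τ ^ (q + 1) := by
  rcases hτ.eq_or_lt with rfl | hτ
  · simpa using mul_nonneg hC (Real.rpow_nonneg le_rfl (q + 1))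
  · calc m * τ ≤ C * τ ^ q * τ := mul_le_mul_of_nonneg_right (hm hτ) hτ.le
      _ = C * τ ^ (q + 1) := by rw [Real.rpow_add_one hτ.ne', mul_assoc]

lemma integrable_mul_of_abs_le_one {α : Type*} [MeasurableSpace α] {μ : Measure α}
    [IsFiniteMeasure μ] {f g : α → ℝ} (hf : AEStronglyMeasurable f μ)
    (hg : AEStronglyMeasurable g μ) (hf1 : ∀ x, |f x| ≤ 1) (hg1 : ∀ x, |g x| ≤ 1) :
    Integrable (fun x => f x * g x) μ :=
  Integrable.of_bound (hf.mul hg) 1 (ae_of_all _ fun x => by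
    rw [Real.norm_eq_abs, abs_mul]
    exact mul_le_one₀ (hf1 x) (abs_nonneg _) (hg1 x))

lemma integral_mul_le_measureReal_sublevel_mul_add {α : Type*} [MeasurableSpace α]
    (μ : Measure α) [IsProbabilityMeasure μ] {f g : α → ℝ} (hf : Measurable f)
    (hg : AEStronglyMeasurable g μ)
    (hf0 : ∀ x, 0 ≤ f x) (hf1 : ∀ x, f x ≤ 1) (hg0 : ∀ x, 0 ≤ g x) (hg1 : ∀ x, g x ≤ 1)
    {τ K : ℝ} (hK : 0 ≤ K) (hgK : ∀ᵐ x ∂μ, τ < f x → g x ≤ K) :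
    ∫ x, f x * g x ∂μ ≤ μ.real {x | f x ≤ τ} * τ + K := by
  set A := {x | f x ≤ τ}
  have hA : MeasurableSet A := hf measurableSet_Iic
  have hfg := integrable_mul_of_abs_le_one hf.aestronglyMeasurable hg
    (fun x => (abs_of_nonneg (hf0 x)).trans_le (hf1 x))
    (fun x => (abs_of_nonneg (hg0 x)).trans_le (hg1 x))
  have h_small : ∫ x in A, f x * g x ∂μ ≤ μ.real A * τ := by
    rw [← smul_eq_mul, ← setIntegral_const]
    refine setIntegral_mono_on hfg.integrableOn integrableOn_const hA fun x hx => ?_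
    exact (mul_le_of_le_one_right (hf0 x) (hg1 x)).trans hx
  have h_large : ∫ x in Aᶜ, f x * g x ∂μ ≤ K := by
    calc ∫ x in Aᶜ, f x * g x ∂μ ≤ ∫ _ in Aᶜ, K ∂μ := by
          refine setIntegral_mono_on_ae hfg.integrableOn integrableOn_const hA.compl ?_
          filter_upwards [hgK] with x hx hxA
          exact (mul_le_of_le_one_left (hg0 x) (hf1 x)).trans (hx (not_le.1 hxA))
      _ = μ.real Aᶜ * K := setIntegral_const K
      _ ≤ K := mul_le_of_le_one_left hK measureReal_le_one
  rw [← integral_add_compl hA hfg]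
  exact add_le_add h_small h_large

theorem envelope_tsybakov_split_bound_general {d : ℕ} (X : Set (EuclideanSpace ℝ (Fin d)))
    (μ : Measure (EuclideanSpace ℝ (Fin d))) [IsProbabilityMeasure μ]
    (η : EuclideanSpace ℝ (Fin d) → ℝ) (hηm : Measurable η)
    (hη : ∀ x, η x ∈ Set.Icc (0 : ℝ) 1) (γ cγ C q : ℝ) (hγ : 0 < γ) (hcγ : 0 < cγ)
    (hC : 0 < C)
    (henv : ∀ᵐ x ∂μ, |2 * η x - 1| ≤ cγ * tauDist X η x ^ γ)
    (htsy : ∀ s : ℝ, 0 < s → (μ {x | |2 * η x - 1| ≤ s}).toReal ≤ C * s ^ q) :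
    ∀ t τ : ℝ, 0 ≤ t → 0 ≤ τ →
      ∫ x in X, |2 * η x - 1| * Real.exp (-(tauDist X η x) ^ 2 / t) ∂μ ≤
        C * τ ^ (q + 1) + Real.exp (-(τ / cγ) ^ (2 / γ) / t) := by
  intro t τ ht hτ
  have hmargin : Measurable fun x => |2 * η x - 1| := ((hηm.const_mul 2).sub_const 1).abs
  have hweight : Measurable fun x => Real.exp (-(tauDist X η x) ^ 2 / t) :=
    Real.measurable_exp.comp (((measurable_tauDist X η hηm).pow_const 2).neg.div_const t)
  have hmargin_le_one (x) : |2 * η x - 1| ≤ 1 :=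
    abs_le.2 ⟨by linarith [(hη x).1], by linarith [(hη x).2]⟩
  have hweight_le_one (x) : Real.exp (-(tauDist X η x) ^ 2 / t) ≤ 1 :=
    Real.exp_le_one_iff.2 (div_nonpos_of_nonpos_of_nonneg (neg_nonpos.2 (sq_nonneg _)) ht)
  have hsplit := integral_mul_le_measureReal_sublevel_mul_add μ hmargin
    hweight.aestronglyMeasurable (fun x => abs_nonneg _) hmargin_le_one
    (fun x => (Real.exp_pos _).le) hweight_le_one (Real.exp_pos _).le
    (henv.mono fun x hx hlt => Real.exp_neg_sq_div_le_of_le_mul_rpow hτ hcγ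
      (tauDist_nonneg X η x) hγ ht (hlt.le.trans hx))
  have htsy_mul : μ.real {x | |2 * η x - 1| ≤ τ} * τ ≤ C * τ ^ (q + 1) :=
    mul_le_mul_rpow_add_one hC.le hτ (htsy τ)
  have hintegrable := integrable_mul_of_abs_le_one (μ := μ) hmargin.aestronglyMeasurable
    hweight.aestronglyMeasurable (fun x => (abs_abs _).trans_le (hmargin_le_one x))
    (fun x => (abs_of_pos (Real.exp_pos _)).trans_le (hweight_le_one x))
  calc _ ≤ ∫ x, |2 * η x - 1| * Real.exp (-(tauDist X η x) ^ 2 / t) ∂μ :=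
        setIntegral_le_integral hintegrable (ae_of_all _ fun x => by positivity)
    _ ≤ _ := hsplit.trans (by linarith)

/-- Splitting bound: for `X ⊂ ℝ^d` compact and a distribution with envelope of order `γ > 0`
and Tsybakov noise exponent `0 ≤ q < 1`, for all `t, τ ≥ 0` we have
`∫_X |2η-1| e^{-τ_x²/t} dP_X ≤ C τ^{q+1} + exp(-(τ/c_γ)^{2/γ}/t)`. -/
theorem envelope_tsybakov_split_bound {d : ℕ} (X : Set (EuclideanSpace ℝ (Fin d)))
    (hX : IsCompact X) (μ : Measure (EuclideanSpace ℝ (Fin d))) [IsProbabilityMeasure μ]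
    (hsupp : μ Xᶜ = 0) (η : EuclideanSpace ℝ (Fin d) → ℝ) (hηm : Measurable η)
    (hη : ∀ x, η x ∈ Set.Icc (0 : ℝ) 1) (γ cγ C q : ℝ) (hγ : 0 < γ) (hcγ : 0 < cγ)
    (hC : 0 < C) (hq0 : 0 ≤ q) (hq1 : q < 1)
    (henv : ∀ᵐ x ∂μ, |2 * η x - 1| ≤ cγ * tauDist X η x ^ γ)
    (htsy : ∀ s : ℝ, 0 < s → (μ {x | |2 * η x - 1| ≤ s}).toReal ≤ C * s ^ q) :
    ∀ t τ : ℝ, 0 ≤ t → 0 ≤ τ →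
      ∫ x in X, |2 * η x - 1| * Real.exp (-(tauDist X η x) ^ 2 / t) ∂μ ≤
        C * τ ^ (q + 1) + Real.exp (-(τ / cγ) ^ (2 / γ) / t) :=
  envelope_tsybakov_split_bound_general X μ η hηm hη γ cγ C q hγ hcγ hC henv htsy
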